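/- With notation as in the Keyes–Reiter operation (L an n×n symmetric integer matrix with L' its Chio condensation at entry (n,n)): for all k ∈ [n−2], d_n^{k−1}·D_{k+1}(L) divides D_k(L'), where d_n = ℓ_{n,n} and D_k denotes the gcd of all k×k minors. -/

import Mathlib

/-
Every `k × k` minor of the Chio condensation `chio L` is the Chio condensation of the
`(k+1) × (k+1)` minor of `L` obtained by adjoining the last row and column. Chio's identity
`det (chio A) = a ^ (k - 1) * det A`, with `a` the corner entry of `A`, then shows that each such
minor is divisible by `a ^ (k - 1) * D_{k+1}(L)`.
-/

open Matrix

/-- `Dk B k` is the gcd of all `k × k` minors of `B`. -/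
noncomputable def Dk {m n : ℕ} (B : Matrix (Fin m) (Fin n) ℤ) (k : ℕ) : ℤ :=
  Finset.univ.gcd fun p : (Fin k ↪ Fin m) × (Fin k ↪ Fin n) =>
    (B.submatrix p.1 p.2).det

/-- `DkStar B k` is the gcd of all `k × k` minors of `B` whose row set contains the
last row and whose column set contains the last column. -/
noncomputable def DkStar {m n : ℕ} (B : Matrix (Fin (m+1)) (Fin (n+1)) ℤ) (k : ℕ) : ℤ :=
  (Finset.univ.filter fun p : (Fin k ↪ Fin (m+1)) × (Fin k ↪ Fin (n+1)) =>
    (∃ i, p.1 i = Fin.last m) ∧ (∃ j, p.2 j = Fin.last n)).gcd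
    fun p => (B.submatrix p.1 p.2).det

/-- Chio condensation of an `(n+1) × (n+1)` matrix at the entry `(n,n)`. -/
def chio {n : ℕ} (L : Matrix (Fin (n+1)) (Fin (n+1)) ℤ) : Matrix (Fin n) (Fin n) ℤ :=
  fun i j => L i.castSucc j.castSucc * L (Fin.last n) (Fin.last n)
    - L i.castSucc (Fin.last n) * L (Fin.last n) j.castSucc

/-- gcd of the entries of the last row. -/
def lastRowGcd {n : ℕ} (L : Matrix (Fin (n+1)) (Fin (n+1)) ℤ) : ℤ :=
  Finset.univ.gcd fun j => L (Fin.last n) j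

namespace Fin.Embedding

def snocLast {k n : ℕ} (r : Fin k ↪ Fin n) : Fin (k + 1) ↪ Fin (n + 1) :=
  snoc (r.trans castSuccEmb) (a := last n) (by simp [Fin.castSucc_ne_last])

@[simp]
theorem snocLast_castSucc {k n : ℕ} (r : Fin k ↪ Fin n) (i : Fin k) :
    snocLast r i.castSucc = (r i).castSucc := snoc_castSucc

@[simp]
theorem snocLast_last {k n : ℕ} (r : Fin k ↪ Fin n) : snocLast r (last k) = last n := snoc_last

end Fin.Embedding

open Fin.Embedding in
theorem chio_submatrix {n k : ℕ} (L : Matrix (Fin (n+1)) (Fin (n+1)) ℤ)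
    (r c : Fin k ↪ Fin n) :
    (chio L).submatrix r c = chio (L.submatrix (snocLast r) (snocLast c)) := by
  ext i j
  simp [chio]

section Chio

variable {k : ℕ} (A : Matrix (Fin (k+1)) (Fin (k+1)) ℤ)

theorem last_mul_det_chio :
    A (Fin.last k) (Fin.last k) * (chio A).det = A (Fin.last k) (Fin.last k) ^ k * A.det := by
  set a := A (Fin.last k) (Fin.last k)
  let v : Fin (k+1) → ℤ := Fin.lastCases 1 fun _ => a
  let c : Fin (k+1) → ℤ := Fin.lastCases 0 fun i => -A i.castSucc (Fin.last k)
  let A' : Matrix (Fin (k+1)) (Fin (k+1)) ℤ := of fun i j => v i * A i j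
  let B : Matrix (Fin (k+1)) (Fin (k+1)) ℤ := of fun i j => A' i j + c i * A' (Fin.last k) j
  have hB : B.det = A'.det :=
    det_eq_of_forall_row_eq_smul_add_const c (Fin.last k) (by simp [c]) fun _ _ => rfl
  have hA' : A'.det = a ^ k * A.det := by
    rw [det_mul_column, Fin.prod_univ_castSucc]
    simp [v]
  -- `B` is `A` with its first `k` rows scaled by `a` and then cleared in the last column by the
  -- last row; expanding along that column leaves `a` times the complementary minor `chio A`.
  have hB' : B.det = a * (chio A).det := by
    have hcol (i : Fin k) : B i.castSucc (Fin.last k) = 0 := by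
      simp [B, A', v, c, a, mul_comm]
    have hsub : B.submatrix Fin.castSucc Fin.castSucc = chio A := by
      ext i j
      simp [B, A', v, c, chio, a]
      ring
    rw [det_succ_column B (Fin.last k), Fin.sum_univ_castSucc]
    simp only [hcol, hsub, Fin.succAbove_last, mul_zero, zero_mul, Finset.sum_const_zero, zero_add]
    simp [B, A', v, c, a]
  rw [← hA', ← hB, hB']

theorem det_chio_of_last_eq_zero (hk : 2 ≤ k) (ha : A (Fin.last k) (Fin.last k) = 0) :
    (chio A).det = 0 := by
  let lastRow : Matrix (Fin k) (Fin k) ℤ := of fun _ j => A (Fin.last k) j.castSucc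
  have hrank_one : chio A = of fun i j => -A i.castSucc (Fin.last k) * lastRow i j := by
    ext i j
    simp [chio, lastRow, ha]
  have hrows : lastRow.det = 0 :=
    det_zero_of_row_eq (i := ⟨0, by omega⟩) (j := ⟨1, by omega⟩) (by simp [Fin.ext_iff]) rfl
  rw [hrank_one, det_mul_column, hrows, mul_zero]

theorem det_chio (hk : 1 ≤ k) :
    (chio A).det = A (Fin.last k) (Fin.last k) ^ (k - 1) * A.det := by
  obtain rfl | hk := hk.eq_or_lt
  · simp [det_fin_two, chio]
  obtain ha | ha := eq_or_ne (A (Fin.last k) (Fin.last k)) 0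
  · rw [det_chio_of_last_eq_zero A hk ha, ha, zero_pow (by omega), zero_mul]
  · apply mul_left_cancel₀ ha
    rw [last_mul_det_chio, ← mul_assoc, ← pow_succ', Nat.sub_add_cancel (by omega)]

end Chio

theorem stmt9_general {n : ℕ} (L : Matrix (Fin (n+1)) (Fin (n+1)) ℤ)
    (k : ℕ) (hk1 : 1 ≤ k) :
    L (Fin.last n) (Fin.last n) ^ (k - 1) * Dk L (k + 1) ∣ Dk (chio L) k := by
  refine Finset.dvd_gcd fun ⟨r, c⟩ _ => ?_
  rw [chio_submatrix, det_chio _ hk1]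
  let r' := Fin.Embedding.snocLast r
  let c' := Fin.Embedding.snocLast c
  have hminor : Dk L (k + 1) ∣ (L.submatrix r' c').det :=
    Finset.gcd_dvd (Finset.mem_univ (r', c'))
  simpa using mul_dvd_mul_left _ hminor

/-- for a symmetric `(n+1) × (n+1)` integer matrix `L` with Chio
condensation `L'` at `(n,n)` and `d_n = ℓ_{n,n}`, for all `k ∈ [(n+1)−2]`,
`d_n^{k−1} · D_{k+1}(L)` divides `D_k(L')`. -/
theorem stmt9 {n : ℕ} (L : Matrix (Fin (n+1)) (Fin (n+1)) ℤ) (hsymm : L.IsSymm)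
    (k : ℕ) (hk1 : 1 ≤ k) (hk2 : k ≤ n - 1) :
    L (Fin.last n) (Fin.last n) ^ (k - 1) * Dk L (k + 1) ∣ Dk (chio L) k :=
  stmt9_general L k hk1
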